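/- arXiv:2503.03595 — 3 statements merged into one kernel-verified Lean document; each statement's English description precedes it below -/
import Mathlib

section
/- Let ξ be a standard Gaussian random variable and A, B real numbers. Then E[ξ · σ(A + Bξ)] = (1/2)(B + |B| erf(A/(√2 B))) when B ≠ 0, where σ(z) = max(z,0) and erf(x) = (2/√π)∫₀^x e^{−s²} ds. In particular E[ξ σ(A + Bξ)] has the same sign as B (strictly, when B ≠ 0). -/
open MeasureTheory ProbabilityTheory

/-- The error function `erf x = (2/√π) ∫₀^x e^{−s²} ds`. -/
noncomputable def errorFun (x : ℝ) : ℝ :=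
  (2 / Real.sqrt Real.pi) * ∫ s in (0 : ℝ)..x, Real.exp (-s ^ 2)

/-!
With `φ` the standard normal density, `φ' = -x φ`, so `x (A + B x) φ = B φ - ((A + B x) φ)'`.
For `B > 0` the integrand is supported on `(-A/B, ∞)`, where the boundary term `(A + B x) φ`
vanishes at both ends; what is left is `B P(ξ > -A/B) = B (1 + erf (A / (√2 B))) / 2`.
The case `B < 0` follows by the symmetry `ξ ↦ -ξ`, and the signs from `|erf| < 1`.
-/

open Real Set Filter Topology

lemma hasDerivAt_errorFun (x : ℝ) :
    HasDerivAt errorFun (2 / √π * exp (-x ^ 2)) x :=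
  HasDerivAt.const_mul _ (Continuous.integral_hasStrictDerivAt (by fun_prop) 0 x).hasDerivAt

lemma errorFun_neg (x : ℝ) : errorFun (-x) = -errorFun x := by
  have h := intervalIntegral.integral_comp_neg (a := 0) (b := x) fun s => exp (-s ^ 2)
  simp only [neg_sq, neg_zero] at h
  rw [errorFun, errorFun, h, intervalIntegral.integral_symm, mul_neg]

lemma strictMono_errorFun : StrictMono errorFun :=
  strictMono_of_deriv_pos fun x => by
    rw [(hasDerivAt_errorFun x).deriv]; positivity

lemma tendsto_errorFun_atTop : Tendsto errorFun atTop (𝓝 1) := by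
  have h := intervalIntegral_tendsto_integral_Ioi 0
    (integrable_exp_neg_mul_sq one_pos).integrableOn tendsto_id
  rw [integral_gaussian_Ioi, div_one] at h
  convert h.const_mul (2 / √π) using 2
  · simp [errorFun]
  · have := sqrt_pos.2 pi_pos; field_simp

lemma errorFun_lt_one (x : ℝ) : errorFun x < 1 :=
  (strictMono_errorFun (lt_add_one x)).trans_le
    (strictMono_errorFun.monotone.ge_of_tendsto tendsto_errorFun_atTop _)

lemma neg_one_lt_errorFun (x : ℝ) : -1 < errorFun x := by
  linarith [errorFun_lt_one (-x), errorFun_neg x]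

lemma hasDerivAt_gaussianPDFReal (μ : ℝ) (v : NNReal) (x : ℝ) :
    HasDerivAt (gaussianPDFReal μ v) (-((x - μ) / v) * gaussianPDFReal μ v x) x := by
  have h : HasDerivAt (fun x => -(x - μ) ^ 2 / (2 * v)) (-((x - μ) / v)) x := by
    have := ((((hasDerivAt_id x).sub_const μ).fun_pow 2).fun_neg).div_const (2 * (v : ℝ))
    refine this.congr_deriv ?_
    simp only [id, Nat.cast_ofNat]
    by_cases hv : (v : ℝ) = 0
    · simp [hv]
    · field_simp; ring
  rw [gaussianPDFReal_def]
  exact (h.exp.const_mul (√(2 * π * v))⁻¹).congr_deriv (by ring)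

lemma gaussianPDFReal_zero_one (x : ℝ) :
    gaussianPDFReal 0 1 x = (√(2 * π))⁻¹ * exp (-x ^ 2 / 2) := by
  simp [gaussianPDFReal]

lemma hasDerivAt_errorFun_div_sqrt_two (x : ℝ) :
    HasDerivAt (fun x => errorFun (x / √2) / 2) (gaussianPDFReal 0 1 x) x := by
  refine (((hasDerivAt_errorFun (x / √2)).comp x
    ((hasDerivAt_id x).div_const √2)).div_const 2).congr_deriv ?_
  rw [gaussianPDFReal_zero_one, div_pow, sq_sqrt zero_le_two, sqrt_mul zero_le_two]
  have := sqrt_pos.2 pi_pos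
  field_simp

lemma integral_Ioi_gaussianPDFReal_zero_one (c : ℝ) :
    ∫ x in Ioi c, gaussianPDFReal 0 1 x = (1 - errorFun (c / √2)) / 2 := by
  have h := tendsto_errorFun_atTop.comp (tendsto_id.atTop_div_const (sqrt_pos.2 two_pos))
  rw [integral_Ioi_of_hasDerivAt_of_tendsto' (fun x _ => hasDerivAt_errorFun_div_sqrt_two x)
    (integrable_gaussianPDFReal 0 1).integrableOn (h.div_const 2)]
  ring

lemma integrable_pow_mul_gaussianPDFReal_zero_one (n : ℕ) :
    Integrable fun x => x ^ n * gaussianPDFReal 0 1 x := by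
  have h := (integrable_rpow_mul_exp_neg_mul_sq (b := 1 / 2) (by norm_num) (s := n)
    (by linarith [n.cast_nonneg (α := ℝ)])).const_mul (√(2 * π))⁻¹
  refine h.congr (ae_of_all _ fun x => ?_)
  simp only [gaussianPDFReal_zero_one, rpow_natCast]; ring_nf

lemma integral_Ioi_mul_affine_mul_gaussianPDFReal_zero_one (A B c : ℝ) :
    ∫ x in Ioi c, x * (A + B * x) * gaussianPDFReal 0 1 x =
      (A + B * c) * gaussianPDFReal 0 1 c + B * ((1 - errorFun (c / √2)) / 2) := by
  set φ := gaussianPDFReal 0 1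
  have hpow := integrable_pow_mul_gaussianPDFReal_zero_one
  have hG : ∀ x, HasDerivAt (fun x => (A + B * x) * φ x) (B * φ x - x * (A + B * x) * φ x) x :=
    fun x => (((hasDerivAt_id x).const_mul B).const_add A |>.mul
      (hasDerivAt_gaussianPDFReal 0 1 x)).congr_deriv (by
        simp only [mul_one, id_eq, sub_zero, NNReal.coe_one, div_one, neg_mul, mul_neg]; ring)
  have hG_int : Integrable fun x => (A + B * x) * φ x :=
    ((hpow 0).const_mul A |>.add ((hpow 1).const_mul B)).congr
      (ae_of_all _ fun x => by simp only [Pi.add_apply]; ring)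
  have hmain_int : Integrable fun x => x * (A + B * x) * φ x :=
    ((hpow 1).const_mul A |>.add ((hpow 2).const_mul B)).congr
      (ae_of_all _ fun x => by simp only [Pi.add_apply]; ring)
  have hG'_int : Integrable fun x => B * φ x - x * (A + B * x) * φ x :=
    ((integrable_gaussianPDFReal 0 1).const_mul B).sub hmain_int
  have hG_lim : Tendsto (fun x => (A + B * x) * φ x) atTop (𝓝 0) :=
    tendsto_zero_of_hasDerivAt_of_integrableOn_Ioi (a := 0) (fun x _ => hG x)
      hG'_int.integrableOn hG_int.integrableOn
  have hFTC := integral_Ioi_of_hasDerivAt_of_tendsto' (a := c) (fun x _ => hG x)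
    hG'_int.integrableOn hG_lim
  rw [integral_sub ((integrable_gaussianPDFReal 0 1).const_mul B).integrableOn
    hmain_int.integrableOn, integral_const_mul, integral_Ioi_gaussianPDFReal_zero_one] at hFTC
  linarith

lemma integral_mul_relu_gaussianReal_of_pos (A : ℝ) {B : ℝ} (hB : 0 < B) :
    ∫ ξ, ξ * max (A + B * ξ) 0 ∂gaussianReal 0 1 =
      B * (1 + errorFun (A / (√2 * B))) / 2 := by
  have hsupport : ∀ x, gaussianPDFReal 0 1 x • (x * max (A + B * x) 0) =
      (Ioi (-A / B)).indicator (fun x => x * (A + B * x) * gaussianPDFReal 0 1 x) x := by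
    intro x
    by_cases hx : x ∈ Ioi (-A / B)
    · rw [indicator_of_mem hx, max_eq_left, smul_eq_mul, mul_comm]
      nlinarith [(div_lt_iff₀ hB).1 (mem_Ioi.1 hx)]
    · rw [indicator_of_notMem hx, max_eq_right, mul_zero, smul_zero]
      nlinarith [(le_div_iff₀ hB).1 (not_lt.1 (mem_Ioi.not.1 hx))]
  have hcross : A + B * (-A / B) = 0 := by field_simp; ring
  have hc : -A / B / √2 = -(A / (√2 * B)) := by ring
  rw [integral_gaussianReal_eq_integral_smul one_ne_zero, funext hsupport,
    integral_indicator measurableSet_Ioi, integral_Ioi_mul_affine_mul_gaussianPDFReal_zero_one,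
    hcross, hc, errorFun_neg]
  ring

lemma integral_comp_neg_gaussianReal {E : Type*} [NormedAddCommGroup E] [NormedSpace ℝ E]
    (v : NNReal) (f : ℝ → E) :
    ∫ x, f (-x) ∂gaussianReal 0 v = ∫ x, f x ∂gaussianReal 0 v := by
  conv_rhs => rw [← neg_zero, ← gaussianReal_map_neg]
  exact (integral_map_equiv (MeasurableEquiv.neg ℝ) f).symm

lemma integral_mul_relu_gaussianReal (A : ℝ) {B : ℝ} (hB : B ≠ 0) :
    ∫ ξ, ξ * max (A + B * ξ) 0 ∂gaussianReal 0 1 =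
      1 / 2 * (B + |B| * errorFun (A / (√2 * B))) := by
  rcases hB.lt_or_gt with hneg | hpos
  · have hreflect : ∀ ξ, -ξ * max (A + B * -ξ) 0 = -(ξ * max (A + -B * ξ) 0) := fun ξ => by
      ring_nf
    rw [← integral_comp_neg_gaussianReal, funext hreflect, integral_neg,
      integral_mul_relu_gaussianReal_of_pos A (neg_pos.2 hneg), abs_of_neg hneg, mul_neg,
      div_neg, errorFun_neg]
    ring
  · rw [integral_mul_relu_gaussianReal_of_pos A hpos, abs_of_pos hpos]
    ring

/-- For `ξ` a standard Gaussian and reals `A`, `B` with `B ≠ 0`,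
`E[ξ σ(A + Bξ)] = (1/2)(B + |B| erf(A/(√2 B)))` where `σ` is the ReLU; in
particular this expectation has (strictly) the same sign as `B`. -/
theorem gaussian_relu_correlation (A B : ℝ) (hB : B ≠ 0) :
    (∫ ξ, ξ * max (A + B * ξ) 0 ∂(gaussianReal 0 1)) =
        (1 / 2) * (B + |B| * errorFun (A / (Real.sqrt 2 * B))) ∧
      (0 < B → 0 < ∫ ξ, ξ * max (A + B * ξ) 0 ∂(gaussianReal 0 1)) ∧
      (B < 0 → (∫ ξ, ξ * max (A + B * ξ) 0 ∂(gaussianReal 0 1)) < 0) := by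
  have hlt := errorFun_lt_one (A / (√2 * B))
  have hgt := neg_one_lt_errorFun (A / (√2 * B))
  rw [integral_mul_relu_gaussianReal A hB]
  refine ⟨rfl, fun hpos => ?_, fun hneg => ?_⟩
  · rw [abs_of_pos hpos]; nlinarith
  · rw [abs_of_neg hneg]; nlinarith
end

section
/- Let K(w,b) = E_x[y(x) σ(w^⊤x + b)] where σ is ReLU, x = √(ᾱ) x_0 + √(1−ᾱ) ξ with x_0 coordinates bounded by 1 in absolute value, ξ ~ N(0, I), y(x) = ξ^{(i)} (the i-th noise coordinate), and the constraint ‖w‖² + b² = 1. Then |K(w,b)| ≤ √(1−ᾱ). -/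
/-!
Set the `i`-th noise coordinate to zero inside the ReLU. The resulting random variable is
independent of `ξ⁽ⁱ⁾` given `x₀`, so its product with the centred `ξ⁽ⁱ⁾` has mean zero. The ReLU
is 1-Lipschitz, so this change moves it by at most `√(1-ᾱ) |w⁽ⁱ⁾| |ξ⁽ⁱ⁾|`, hence
`|K(w,b)| ≤ √(1-ᾱ) |w⁽ⁱ⁾| E[(ξ⁽ⁱ⁾)²] = √(1-ᾱ) |w⁽ⁱ⁾| ≤ √(1-ᾱ)`.
-/

open MeasureTheory ProbabilityTheory Function

section

variable {Ω α β : Type*} [MeasurableSpace Ω] {μ : Measure Ω} [MeasurableSpace α]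
  [MeasurableSpace β]

lemma ProbabilityTheory.IndepFun.integral_eq_zero_of_forall_integral_eq_zero
    [IsFiniteMeasure μ] {X : Ω → α} {Y : Ω → β} (hXY : IndepFun X Y μ)
    (hX : Measurable X) (hY : Measurable Y) {F : α → β → ℝ} (hF : Measurable (uncurry F))
    (hint : Integrable (fun ω => F (X ω) (Y ω)) μ) (hzero : ∀ a, ∫ ω, F a (Y ω) ∂μ = 0) :
    ∫ ω, F (X ω) (Y ω) ∂μ = 0 := by
  have hXYm : AEMeasurable (fun ω => (X ω, Y ω)) μ := (hX.prodMk hY).aemeasurable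
  have hprod : μ.map (fun ω => (X ω, Y ω)) = (μ.map X).prod (μ.map Y) :=
    (indepFun_iff_map_prod_eq_prod_map_map hX.aemeasurable hY.aemeasurable).1 hXY
  have hFint : Integrable (uncurry F) ((μ.map X).prod (μ.map Y)) := by
    rwa [← hprod, integrable_map_measure hF.aestronglyMeasurable hXYm]
  calc ∫ ω, F (X ω) (Y ω) ∂μ = ∫ p, uncurry F p ∂(μ.map fun ω => (X ω, Y ω)) :=
        (integral_map hXYm hF.aestronglyMeasurable).symm
    _ = ∫ a, ∫ y, F a y ∂(μ.map Y) ∂(μ.map X) := by rw [hprod, integral_prod _ hFint]; rfl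
    _ = 0 := by
        refine integral_eq_zero_of_ae (.of_forall fun a => ?_)
        have hFa : Measurable (F a) := hF.comp measurable_prodMk_left
        exact (integral_map hY.aemeasurable hFa.aestronglyMeasurable).trans (hzero a)

lemma ProbabilityTheory.iIndepFun.indepFun_update {ι : Type*} [Fintype ι] [DecidableEq ι]
    {f : ι → Ω → β} (h : iIndepFun f μ) (hf : ∀ j, Measurable (f j)) (i : ι) (c : β) :
    IndepFun (f i) (fun ω => update (fun j => f j ω) i c) μ := by
  let K : (({i}ᶜ : Finset ι) → β) → ι → β := fun t j =>
    if hj : j = i then c else t ⟨j, by simpa using hj⟩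
  have hK : Measurable K := by
    refine measurable_pi_lambda _ fun j => ?_
    by_cases hj : j = i
    · simp only [K, hj, dite_true]; exact measurable_const
    · simp only [K, hj, dite_false]; exact measurable_pi_apply _
  have hupdate : (fun ω => update (fun j => f j ω) i c)
      = K ∘ fun ω (j : ({i}ᶜ : Finset ι)) => f j ω := by
    funext ω j
    by_cases hj : j = i
    · subst hj; simp [K]
    · simp [K, hj]
  rw [hupdate]
  exact (h.indepFun_finset {i} {i}ᶜ disjoint_compl_right hf).comp
    (measurable_pi_apply ⟨i, Finset.mem_singleton_self i⟩) hK

theorem abs_integral_mul_le_of_abs_sub_update_le {ι : Type*} [Fintype ι] [DecidableEq ι]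
    [IsFiniteMeasure μ] {X : Ω → α} {ξ : Ω → ι → ℝ} (hX : Measurable X) (hξ : Measurable ξ)
    (hXξ : IndepFun X ξ μ) (hiid : iIndepFun (fun j ω => ξ ω j) μ) (i : ι)
    (hmean : ∫ ω, ξ ω i ∂μ = 0) (hsq : Integrable (fun ω => ξ ω i ^ 2) μ)
    {H : α → (ι → ℝ) → ℝ} (hH : Measurable (uncurry H)) {L : ℝ}
    (hL : ∀ a z, |H a z - H a (update z i 0)| ≤ L * |z i|) :
    |∫ ω, ξ ω i * H (X ω) (ξ ω) ∂μ| ≤ L * ∫ ω, ξ ω i ^ 2 ∂μ := by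
  have hξi : Measurable fun ω => ξ ω i := (measurable_pi_apply i).comp hξ
  have hupd : Measurable fun z : ι → ℝ => update z i 0 := measurable_update_left
  set f := fun ω => ξ ω i * H (X ω) (ξ ω)
  set g := fun ω => ξ ω i * H (X ω) (update (ξ ω) i 0)
  have hfg_le : ∀ ω, |f ω - g ω| ≤ L * ξ ω i ^ 2 := fun ω =>
    calc |f ω - g ω| = |ξ ω i| * |H (X ω) (ξ ω) - H (X ω) (update (ξ ω) i 0)| := by
          rw [← abs_mul, mul_sub]
      _ ≤ |ξ ω i| * (L * |ξ ω i|) := mul_le_mul_of_nonneg_left (hL _ _) (abs_nonneg _)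
      _ = L * ξ ω i ^ 2 := by rw [← sq_abs (ξ ω i)]; ring
  have hfg : Integrable (fun ω => f ω - g ω) μ := by
    refine (hsq.const_mul L).mono' ?_ (.of_forall fun ω => hfg_le ω)
    exact ((hξi.mul (hH.comp (hX.prodMk hξ))).sub
      (hξi.mul (hH.comp (hX.prodMk (hupd.comp hξ))))).aestronglyMeasurable
  have hg_zero : Integrable g μ → ∫ ω, g ω ∂μ = 0 := by
    refine fun hgi => hXξ.integral_eq_zero_of_forall_integral_eq_zero hX hξ
      (F := fun a z => z i * H a (update z i 0)) ?_ hgi fun a => ?_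
    · exact measurable_snd.eval.mul
        (hH.comp (measurable_fst.prodMk (hupd.comp measurable_snd)))
    · have hHa : Measurable (H a) := hH.comp measurable_prodMk_left
      have hind : IndepFun (fun ω => ξ ω i) (fun ω => H a (update (ξ ω) i 0)) μ :=
        (hiid.indepFun_update (fun j => (measurable_pi_apply j).comp hξ) i 0).comp
          measurable_id hHa
      rw [hind.integral_fun_mul_eq_mul_integral hξi.aestronglyMeasurable
        (hHa.comp (hupd.comp hξ)).aestronglyMeasurable, hmean, zero_mul]
  calc |∫ ω, f ω ∂μ| ≤ ∫ ω, L * ξ ω i ^ 2 ∂μ := ?_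
    _ = L * ∫ ω, ξ ω i ^ 2 ∂μ := integral_const_mul _ _
  by_cases hf : Integrable f μ
  · have hgi : Integrable g μ := (hf.sub hfg).congr (.of_forall fun ω => sub_sub_cancel _ _)
    have hf_eq : ∫ ω, f ω ∂μ = ∫ ω, f ω - g ω ∂μ := by
      rw [integral_sub hf hgi, hg_zero hgi, sub_zero]
    rw [hf_eq]
    exact abs_integral_le_integral_abs.trans (integral_mono hfg.abs (hsq.const_mul L) hfg_le)
  · rw [integral_undef hf, abs_zero]
    exact integral_nonneg fun ω => (abs_nonneg _).trans (hfg_le ω)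

end

lemma abs_relu_sub_relu_update_le {ι : Type*} [Fintype ι] [DecidableEq ι] (w a z : ι → ℝ)
    (s t b : ℝ) (i : ι) :
    |max (∑ j, w j * (s * a j + t * z j) + b) 0
        - max (∑ j, w j * (s * a j + t * update z i 0 j) + b) 0| ≤ |t * w i| * |z i| := by
  refine (abs_max_sub_max_le_abs _ _ _).trans_eq ?_
  rw [← abs_mul, add_sub_add_right_eq_sub, ← Finset.sum_sub_distrib,
    Finset.sum_eq_single_of_mem i (Finset.mem_univ i) fun j _ hj => by simp [hj]]
  simp only [update_self]
  ring_nf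

theorem growth_rate_bound_general
    {Ω : Type*} [MeasurableSpace Ω] (μ : Measure Ω) [IsProbabilityMeasure μ]
    (d : ℕ) (i : Fin d) (α : ℝ)
    (x₀ ξ : Ω → Fin d → ℝ) (hx₀m : Measurable x₀) (hξm : Measurable ξ)
    (hgauss : ∀ j, Measure.map (fun ω => ξ ω j) μ = gaussianReal 0 1)
    (hiid : iIndepFun (fun j ω => ξ ω j) μ)
    (hindep : IndepFun x₀ ξ μ)
    (w : Fin d → ℝ) (b : ℝ) (hwb : (∑ j, (w j) ^ 2) + b ^ 2 = 1) :
    |∫ ω, ξ ω i *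
        max ((∑ j, w j * (Real.sqrt α * x₀ ω j + Real.sqrt (1 - α) * ξ ω j)) + b) 0 ∂μ|
      ≤ Real.sqrt (1 - α) := by
  have hlaw : HasLaw (fun ω => ξ ω i) (gaussianReal 0 1) μ :=
    ⟨((measurable_pi_apply i).comp hξm).aemeasurable, hgauss i⟩
  have hmean : ∫ ω, ξ ω i ∂μ = 0 := hlaw.integral_eq.trans integral_id_gaussianReal
  have hsq : ∫ ω, ξ ω i ^ 2 ∂μ = 1 := by
    rw [← variance_of_integral_eq_zero hlaw.aemeasurable hmean, hlaw.variance_eq,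
      variance_id_gaussianReal, NNReal.coe_one]
  have hwi : |w i| ≤ 1 := by
    have := Finset.single_le_sum (fun j _ => sq_nonneg (w j)) (Finset.mem_univ i)
    exact (sq_le_one_iff_abs_le_one _).1 (by nlinarith [sq_nonneg b])
  calc _ ≤ |Real.sqrt (1 - α) * w i| * ∫ ω, ξ ω i ^ 2 ∂μ :=
        abs_integral_mul_le_of_abs_sub_update_le hx₀m hξm hindep hiid i hmean
          hlaw.hasGaussianLaw.memLp_two.integrable_sq (by fun_prop)
          fun a z => abs_relu_sub_relu_update_le w a z _ _ b i
    _ ≤ Real.sqrt (1 - α) := by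
        rw [hsq, mul_one, abs_mul, abs_of_nonneg (Real.sqrt_nonneg _)]
        exact mul_le_of_le_one_right (Real.sqrt_nonneg _) hwi

/-- The growth-rate function `K(w,b) = E[ξ⁽ⁱ⁾ σ(wᵀx + b)]`, with
`x = √ᾱ x₀ + √(1−ᾱ) ξ`, `|x₀⁽ʲ⁾| ≤ 1`, `ξ` having i.i.d. standard Gaussian
coordinates independent of `x₀`, and `‖w‖² + b² = 1`, satisfies
`|K(w,b)| ≤ √(1−ᾱ)`. -/
theorem growth_rate_bound
    {Ω : Type*} [MeasurableSpace Ω] (μ : Measure Ω) [IsProbabilityMeasure μ]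
    (d : ℕ) (i : Fin d) (α : ℝ) (hα : α ∈ Set.Ioo (0 : ℝ) 1)
    (x₀ ξ : Ω → Fin d → ℝ) (hx₀m : Measurable x₀) (hξm : Measurable ξ)
    (hbdd : ∀ ω j, |x₀ ω j| ≤ 1)
    (hgauss : ∀ j, Measure.map (fun ω => ξ ω j) μ = gaussianReal 0 1)
    (hiid : iIndepFun (fun j ω => ξ ω j) μ)
    (hindep : IndepFun x₀ ξ μ)
    (w : Fin d → ℝ) (b : ℝ) (hwb : (∑ j, (w j) ^ 2) + b ^ 2 = 1) :
    |∫ ω, ξ ω i *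
        max ((∑ j, w j * (Real.sqrt α * x₀ ω j + Real.sqrt (1 - α) * ξ ω j)) + b) 0 ∂μ|
      ≤ Real.sqrt (1 - α) :=
  growth_rate_bound_general μ d i α x₀ ξ hx₀m hξm hgauss hiid hindep w b hwb
end

section
/- Let z: ℝ≥0 → ℝ^n ∖ {0} be differentiable and let K: S^{n-1} → ℝ be continuously differentiable on the unit sphere. If dz/ds = c(s) · G(s) where c(s) > 0 and the spherical gradient satisfies ∇_{S} K(z/‖z‖) = (I − zz^⊤/‖z‖²) G(s), then d/ds K(z(s)/‖z(s)‖) = c(s)/‖z(s)‖ · ‖(I − zz^⊤/‖z‖²) G(s)‖² ≥ 0, i.e., the growth-rate function K is nondecreasing along the normalized trajectory. -/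
open scoped RealInnerProductSpace

/-!
The normalized curve `z/‖z‖` moves with velocity `‖z‖⁻¹` times the tangential part of
`ż = c • G`. By the chain rule, `d/ds K(z/‖z‖)` is the gradient of `K` paired with this velocity.
Since a tangential vector is orthogonal to `z`, only the tangential part of the gradient contributes,
and by hypothesis it equals the tangential part of `G`; the pairing is therefore
`c/‖z‖ · ‖(tangential part of G)‖² ≥ 0`.
-/

section

variable {E : Type*} [NormedAddCommGroup E] [InnerProductSpace ℝ E]

noncomputable def tangentPart (x v : E) : E := v - (⟪x, v⟫ / ‖x‖ ^ 2) • x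

theorem inner_tangentPart_right_self (x v : E) : ⟪x, tangentPart x v⟫ = 0 := by
  have hzero : ‖x‖ ^ 2 = 0 → ⟪x, v⟫ = 0 := fun h => by
    rw [norm_eq_zero.mp (pow_eq_zero_iff two_ne_zero |>.mp h), inner_zero_left]
  rw [tangentPart, inner_sub_right, real_inner_smul_right, real_inner_self_eq_norm_sq,
    div_mul_cancel_of_imp hzero, sub_self]

theorem inner_tangentPart_left (x g v : E) :
    ⟪g, tangentPart x v⟫ = ⟪tangentPart x g, tangentPart x v⟫ := by
  change _ = ⟪g - (⟪x, g⟫ / ‖x‖ ^ 2) • x, tangentPart x v⟫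
  rw [inner_sub_left, real_inner_smul_left, inner_tangentPart_right_self, mul_zero, sub_zero]

theorem tangentPart_smul (x v : E) (c : ℝ) : tangentPart x (c • v) = c • tangentPart x v := by
  simp only [tangentPart, real_inner_smul_right, smul_sub, smul_smul]
  congr 2
  ring

theorem HasDerivAt.norm {z : ℝ → E} {z' : E} {s : ℝ} (hz : HasDerivAt z z' s) (h0 : z s ≠ 0) :
    HasDerivAt (fun t => ‖z t‖) (⟪z s, z'⟫ / ‖z s‖) s := by
  have h := hz.norm_sq.sqrt (pow_ne_zero 2 (norm_ne_zero_iff.mpr h0))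
  simp only [Real.sqrt_sq (norm_nonneg _)] at h
  convert h using 1
  ring

theorem HasDerivAt.inv_norm_smul_self {z : ℝ → E} {z' : E} {s : ℝ} (hz : HasDerivAt z z' s)
    (h0 : z s ≠ 0) :
    HasDerivAt (fun t => ‖z t‖⁻¹ • z t) (‖z s‖⁻¹ • tangentPart (z s) z') s := by
  have hn : ‖z s‖ ≠ 0 := norm_ne_zero_iff.mpr h0
  convert ((hz.norm h0).inv hn).smul hz using 1
  · rfl
  · simp only [tangentPart, Pi.inv_apply]
    match_scalars <;> field_simp

theorem HasGradientAt.hasDerivAt_comp_inv_norm_smul_self [CompleteSpace E] {K : E → ℝ}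
    {g z' : E} {z : ℝ → E} {s : ℝ} (hK : HasGradientAt K g (‖z s‖⁻¹ • z s))
    (hz : HasDerivAt z z' s) (h0 : z s ≠ 0) :
    HasDerivAt (fun t => K (‖z t‖⁻¹ • z t))
      (‖z s‖⁻¹ * ⟪tangentPart (z s) g, tangentPart (z s) z'⟫) s := by
  have := hK.hasFDerivAt.comp_hasDerivAt s (hz.inv_norm_smul_self h0)
  rwa [InnerProductSpace.toDual_apply_apply, real_inner_smul_right, inner_tangentPart_left] at this

end

/-- If `dz/ds = c(s)·G(s)` with `c(s) > 0`, `K` has gradient `gK(s)` at the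
normalized point `z/‖z‖`, and the spherical (tangential) gradient of `K` at
`z/‖z‖` agrees with the tangential projection of `G(s)`, then
`d/ds K(z/‖z‖) = (c(s)/‖z(s)‖)·‖(I − zzᵀ/‖z‖²)G(s)‖² ≥ 0`: the growth rate `K`
is nondecreasing along the normalized trajectory. -/
theorem growth_rate_nondecreasing
    (n : ℕ) (z G : ℝ → EuclideanSpace ℝ (Fin n)) (c : ℝ → ℝ)
    (K : EuclideanSpace ℝ (Fin n) → ℝ) (gK : ℝ → EuclideanSpace ℝ (Fin n))
    (hz : ∀ s, z s ≠ 0)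
    (hc : ∀ s, 0 < c s)
    (hz' : ∀ s, HasDerivAt z (c s • G s) s)
    (hK : ∀ s, HasGradientAt K (gK s) (‖z s‖⁻¹ • z s))
    (hsph : ∀ s,
      gK s - (⟪z s, gK s⟫ / ‖z s‖ ^ 2) • z s
        = G s - (⟪z s, G s⟫ / ‖z s‖ ^ 2) • z s) :
    ∀ s,
      HasDerivAt (fun t => K (‖z t‖⁻¹ • z t))
        (c s / ‖z s‖ * ‖G s - (⟪z s, G s⟫ / ‖z s‖ ^ 2) • z s‖ ^ 2) s ∧
      0 ≤ c s / ‖z s‖ * ‖G s - (⟪z s, G s⟫ / ‖z s‖ ^ 2) • z s‖ ^ 2 := by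
  intro s
  have hderiv := (hK s).hasDerivAt_comp_inv_norm_smul_self (hz' s) (hz s)
  have hsph' : tangentPart (z s) (gK s) = tangentPart (z s) (G s) := hsph s
  rw [hsph', tangentPart_smul, real_inner_smul_right, real_inner_self_eq_norm_sq] at hderiv
  refine ⟨?_, by have := hc s; positivity⟩
  convert hderiv using 1
  rw [tangentPart]
  ring
end
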